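/- Under the Lyapunov condition K^{(n)}_η V(x) ≤ a_n V(x) + b_n η(V) + c (for all x ∈ R^d, η ∈ P(R^d)), if the N-particle system has E[η^N_0(V)] < ∞, then E[Φ_{n+1}[η^N_n](V)] ≤ A(n+1)·E[η^N_0(V)] + c·Σ_{k=1}^{n+1} Π_{j=k+1}^{n+1}(a_j + b_j), where A(m) = Π_{i=1}^m (a_i + b_i), Φ_{n+1}[μ] := μK^{(n+1)}_μ, and η^N_n is the empirical measure of the particle system. In particular E[V(X^1_n)] = E[η^N_n(V)] satisfies the same recursion as the mean-field moments. -/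

import Mathlib

/-!
Write `m n` for the mean empirical moment `E[η^N_n(V)]`. Given the configuration at time `n`,
the particles move independently, so the expected next empirical measure is
`η^N_n K_{η^N_n} = Φ_{n+1}[η^N_n]`; hence `m (n+1) = E[Φ_{n+1}[η^N_n](V)]`. Integrating the
Lyapunov bound against the probability measure `η^N_n` gives
`Φ_{n+1}[η](V) ≤ (a_{n+1} + b_{n+1}) η(V) + c`, so `m (n+1) ≤ (a_{n+1} + b_{n+1}) m n + c`, and
iterating this recursion gives the bound.

The law of the configuration stays invariant under relabelling of the particles: the initial
law is a product of identical factors, and the transition commutes with permutations because the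
empirical measure does not see the order of the particles. So every particle has the same
`V`-moment, which is therefore the mean empirical moment.
-/

open MeasureTheory ENNReal

noncomputable section

abbrev Ed (d : ℕ) := EuclideanSpace ℝ (Fin d)

/-- Optimal transport cost between two measures for a given cost function. -/
def Wc {X Y : Type*} [MeasurableSpace X] [MeasurableSpace Y] (cost : X → Y → ℝ)
    (μ : Measure X) (ν : Measure Y) : ℝ :=
  sInf {r | ∃ γ : Measure (X × Y), γ.map Prod.fst = μ ∧ γ.map Prod.snd = ν ∧
    r = ∫ p, cost p.1 p.2 ∂γ}

/-- 1-Wasserstein distance. -/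
def W1 {X : Type*} [MeasurableSpace X] [PseudoMetricSpace X] (μ ν : Measure X) : ℝ :=
  Wc dist μ ν

/-- ℓ₂ product cost on (ℝ^d)^q. -/
def l2cost {d q : ℕ} (x y : Fin q → Ed d) : ℝ := Real.sqrt (∑ i, ‖x i - y i‖ ^ 2)

/-- 1-Wasserstein distance on the product space with the ℓ₂ product metric. -/
def W1q {d q : ℕ} (μ ν : Measure (Fin q → Ed d)) : ℝ := Wc l2cost μ ν

/-- Empirical measure of `N` points. -/
def emp {X : Type*} [MeasurableSpace X] {N : ℕ} (x : Fin N → X) : Measure X :=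
  (N : ℝ≥0∞)⁻¹ • ∑ i, Measure.dirac (x i)

/-- Membership in P₁: probability with finite first moment. -/
def memP1 {X : Type*} [MeasurableSpace X] [NormedAddCommGroup X] (μ : Measure X) : Prop :=
  IsProbabilityMeasure μ ∧ HasFiniteIntegral (fun x => ‖x‖) μ

namespace MeasureTheory.Measure

variable {α β γ : Type*} [MeasurableSpace α] [MeasurableSpace β] [MeasurableSpace γ]

theorem measurable_pi {ι : Type*} [Fintype ι] {X : ι → Type*} [∀ i, MeasurableSpace (X i)]
    {μ : α → (i : ι) → Measure (X i)} [∀ a i, IsProbabilityMeasure (μ a i)]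
    (hμ : ∀ i, Measurable fun a => μ a i) : Measurable fun a => Measure.pi (μ a) := by
  refine .measure_of_isPiSystem_of_isProbabilityMeasure generateFrom_pi.symm isPiSystem_pi ?_
  rintro _ ⟨s, hs, rfl⟩
  simp_rw [pi_pi]
  exact Finset.measurable_prod _ fun i _ => (measurable_coe (hs i trivial)).comp (hμ i)

theorem map_bind (μ : Measure α) {κ : α → Measure β} (hκ : Measurable κ) {f : β → γ}
    (hf : Measurable f) : (μ.bind κ).map f = μ.bind fun a => (κ a).map f := by
  rw [← bind_dirac_eq_map _ hf, bind_bind (g := fun b => dirac (f b)) hκ.aemeasurable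
    (measurable_dirac.comp hf).aemeasurable]
  simp_rw [bind_dirac_eq_map _ hf]

theorem bind_map (μ : Measure α) {g : α → β} (hg : Measurable g) {κ : β → Measure γ}
    (hκ : Measurable κ) : (μ.map g).bind κ = μ.bind fun a => κ (g a) := by
  rw [← bind_dirac_eq_map _ hg, bind_bind (f := fun a => dirac (g a))
    (measurable_dirac.comp hg).aemeasurable hκ.aemeasurable]
  simp_rw [dirac_bind hκ]

theorem pi_map_comp_perm {ι X : Type*} [Fintype ι] [MeasurableSpace X] (μ : ι → Measure X)
    [∀ i, SigmaFinite (μ i)] (σ : Equiv.Perm ι) :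
    (Measure.pi μ).map (· ∘ σ) = Measure.pi (μ ∘ σ) := by
  have : ∀ i, SigmaFinite ((μ ∘ σ) i) := fun i => ‹∀ i, SigmaFinite (μ i)› (σ i)
  have h := pi_map_piCongrLeft (β := fun _ => X) σ.symm (μ ∘ σ)
  simp_rw [Function.comp_apply, Equiv.apply_symm_apply] at h
  convert h using 2
  ext x j
  simp [MeasurableEquiv.coe_piCongrLeft, Equiv.piCongrLeft_apply]

theorem lintegral_bind_le_of_le_mul_add {η : Measure α} [IsProbabilityMeasure η]
    {κ : α → Measure α} (hκ : Measurable κ) {V : α → ℝ≥0∞} (hV : Measurable V)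
    {a b c : ℝ≥0∞} (h : ∀ x, ∫⁻ y, V y ∂κ x ≤ a * V x + b * ∫⁻ y, V y ∂η + c) :
    ∫⁻ y, V y ∂η.bind κ ≤ (a + b) * ∫⁻ y, V y ∂η + c :=
  calc ∫⁻ y, V y ∂η.bind κ
      ≤ ∫⁻ x, (a * V x + b * ∫⁻ y, V y ∂η + c) ∂η := by
        rw [lintegral_bind hκ.aemeasurable hV.aemeasurable]
        exact lintegral_mono h
    _ = (a + b) * ∫⁻ y, V y ∂η + c := by
        rw [lintegral_add_right _ measurable_const, lintegral_add_right _ measurable_const,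
          lintegral_const_mul _ hV, lintegral_const, lintegral_const, measure_univ]
        ring

end MeasureTheory.Measure

section Exchangeable

variable {ι X : Type*} [MeasurableSpace X]

def IsExchangeable [Fintype ι] (μ : Measure (ι → X)) : Prop :=
  ∀ σ : Equiv.Perm ι, μ.map (· ∘ σ) = μ

theorem isExchangeable_pi_const [Fintype ι] (ν : Measure X) [SigmaFinite ν] :
    IsExchangeable (Measure.pi fun _ : ι => ν) :=
  fun σ => Measure.pi_map_comp_perm _ σ

theorem measurable_comp_perm (σ : Equiv.Perm ι) : Measurable fun x : ι → X => x ∘ σ :=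
  measurable_pi_lambda _ fun j => measurable_pi_apply (σ j)

theorem IsExchangeable.bind [Fintype ι] {μ : Measure (ι → X)} (hμ : IsExchangeable μ)
    {κ : (ι → X) → Measure (ι → X)} (hκ : Measurable κ)
    (hκσ : ∀ x (σ : Equiv.Perm ι), (κ x).map (· ∘ σ) = κ (x ∘ σ)) :
    IsExchangeable (μ.bind κ) := by
  intro σ
  rw [Measure.map_bind _ hκ (measurable_comp_perm σ), funext fun x => hκσ x σ,
    ← Measure.bind_map _ (measurable_comp_perm σ) hκ, hμ σ]

theorem IsExchangeable.lintegral_comp_eval [Fintype ι] [DecidableEq ι] {μ : Measure (ι → X)}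
    (hμ : IsExchangeable μ) {f : X → ℝ≥0∞} (hf : Measurable f) (i j : ι) :
    ∫⁻ x, f (x i) ∂μ = ∫⁻ x, f (x j) ∂μ := by
  conv_lhs => rw [← hμ (Equiv.swap j i)]
  rw [lintegral_map (by fun_prop) (measurable_comp_perm _)]
  simp

end Exchangeable

section Empirical

variable {X : Type*} [MeasurableSpace X] {N : ℕ}

theorem lintegral_emp {f : X → ℝ≥0∞} (hf : Measurable f) (x : Fin N → X) :
    ∫⁻ y, f y ∂emp x = (N : ℝ≥0∞)⁻¹ * ∑ i, f (x i) := by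
  simp [emp, lintegral_dirac' _ hf]

theorem isProbabilityMeasure_emp (hN : N ≠ 0) (x : Fin N → X) : IsProbabilityMeasure (emp x) :=
  ⟨by simp [emp, ENNReal.inv_mul_cancel (Nat.cast_ne_zero.2 hN) (natCast_ne_top N)]⟩

theorem emp_comp_perm (x : Fin N → X) (σ : Equiv.Perm (Fin N)) : emp (x ∘ σ) = emp x := by
  simp only [emp, Function.comp_apply, Equiv.sum_comp σ fun i => Measure.dirac (x i)]

theorem measurable_lintegral_emp {f : X → ℝ≥0∞} (hf : Measurable f) :
    Measurable fun x : Fin N → X => ∫⁻ y, f y ∂emp x := by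
  simp_rw [lintegral_emp hf]
  exact (Finset.measurable_sum _ fun i _ => hf.comp (measurable_pi_apply i)).const_mul _

theorem IsExchangeable.lintegral_lintegral_emp {μ : Measure (Fin N → X)}
    (hμ : IsExchangeable μ) {f : X → ℝ≥0∞} (hf : Measurable f) (hN : 0 < N) :
    ∫⁻ x, ∫⁻ y, f y ∂emp x ∂μ = ∫⁻ x, f (x ⟨0, hN⟩) ∂μ := by
  simp_rw [lintegral_emp hf]
  rw [lintegral_const_mul _ (by fun_prop), lintegral_finsetSum _ fun i _ => by fun_prop]
  simp_rw [hμ.lintegral_comp_eval hf _ ⟨0, hN⟩]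
  simp [← mul_assoc, ENNReal.inv_mul_cancel (Nat.cast_ne_zero.2 hN.ne') (natCast_ne_top N)]

theorem lintegral_lintegral_emp_pi {μ : Fin N → Measure X} [∀ i, IsProbabilityMeasure (μ i)]
    {f : X → ℝ≥0∞} (hf : Measurable f) :
    ∫⁻ x, ∫⁻ y, f y ∂emp x ∂Measure.pi μ = (N : ℝ≥0∞)⁻¹ * ∑ i, ∫⁻ y, f y ∂μ i := by
  simp_rw [lintegral_emp hf]
  rw [lintegral_const_mul _ (by fun_prop), lintegral_finsetSum _ fun i _ => by fun_prop]
  congr 1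
  refine Finset.sum_congr rfl fun i _ => ?_
  exact (measurePreserving_eval μ i).lintegral_comp hf

end Empirical

section ParticleSystem

variable {X : Type*} [MeasurableSpace X] {N : ℕ} (Kη : Measure X → X → Measure X)

def particleStep (x : Fin N → X) : Measure (Fin N → X) :=
  Measure.pi fun i => Kη (emp x) (x i)

variable {Kη}

theorem measurable_apply_emp
    (hKm : Measurable fun xz : (Fin N → X) × X => Kη (emp xz.1) xz.2) (x : Fin N → X) :
    Measurable (Kη (emp x)) :=
  Measurable.of_uncurry_left (f := fun x : Fin N → X => Kη (emp x)) hKm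

theorem lintegral_lintegral_emp_bind_le (hN : N ≠ 0)
    (hKm : Measurable fun xz : (Fin N → X) × X => Kη (emp xz.1) xz.2) {μ : Measure (Fin N → X)}
    [IsProbabilityMeasure μ] {V : X → ℝ≥0∞} (hV : Measurable V) {a b c : ℝ≥0∞}
    (hLyap : ∀ η, IsProbabilityMeasure η → ∀ x,
      ∫⁻ y, V y ∂Kη η x ≤ a * V x + b * ∫⁻ y, V y ∂η + c) :
    ∫⁻ x, ∫⁻ y, V y ∂(emp x).bind (Kη (emp x)) ∂μ
      ≤ (a + b) * ∫⁻ x, ∫⁻ y, V y ∂emp x ∂μ + c :=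
  calc _ ≤ ∫⁻ x, ((a + b) * ∫⁻ y, V y ∂emp x + c) ∂μ :=
        lintegral_mono fun x =>
          have := isProbabilityMeasure_emp hN x
          Measure.lintegral_bind_le_of_le_mul_add (measurable_apply_emp hKm x) hV (hLyap _ this)
    _ = _ := by
        rw [lintegral_add_right _ measurable_const,
          lintegral_const_mul _ (measurable_lintegral_emp hV), lintegral_const, measure_univ,
          mul_one]

variable (hK : ∀ η z, IsProbabilityMeasure (Kη η z))
include hK

theorem measurable_particleStep
    (hKm : Measurable fun xz : (Fin N → X) × X => Kη (emp xz.1) xz.2) :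
    Measurable (particleStep (N := N) Kη) :=
  have := hK
  Measure.measurable_pi fun i =>
    hKm.comp (f := fun x : Fin N → X => (x, x i)) (measurable_id.prodMk (measurable_pi_apply i))

theorem isProbabilityMeasure_particleStep (x : Fin N → X) :
    IsProbabilityMeasure (particleStep Kη x) :=
  have := hK
  inferInstanceAs (IsProbabilityMeasure (Measure.pi _))

theorem particleStep_map_comp_perm (x : Fin N → X) (σ : Equiv.Perm (Fin N)) :
    (particleStep Kη x).map (· ∘ σ) = particleStep Kη (x ∘ σ) := by
  have := hK
  rw [particleStep, Measure.pi_map_comp_perm, particleStep, emp_comp_perm]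
  rfl

theorem lintegral_lintegral_emp_particleStep
    (hKm : Measurable fun xz : (Fin N → X) × X => Kη (emp xz.1) xz.2) {f : X → ℝ≥0∞}
    (hf : Measurable f) (x : Fin N → X) :
    ∫⁻ z, ∫⁻ y, f y ∂emp z ∂particleStep Kη x = ∫⁻ y, f y ∂(emp x).bind (Kη (emp x)) := by
  have := hK
  have hKx := measurable_apply_emp hKm x
  rw [particleStep, lintegral_lintegral_emp_pi hf,
    Measure.lintegral_bind hKx.aemeasurable hf.aemeasurable,
    lintegral_emp (f := fun z => ∫⁻ y, f y ∂Kη (emp x) z)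
      ((Measure.measurable_lintegral hf).comp hKx)]

end ParticleSystem

section ParticleLaw

variable {X : Type*} [MeasurableSpace X] {N : ℕ} {K : ℕ → Measure X → X → Measure X}
  (hK : ∀ n η z, IsProbabilityMeasure (K n η z))
  (hKm : ∀ n, Measurable fun xz : (Fin N → X) × X => K n (emp xz.1) xz.2)
  {L : ℕ → Measure (Fin N → X)} (hL : ∀ n, L (n + 1) = (L n).bind (particleStep (K (n + 1))))
include hK hKm hL

theorem isProbabilityMeasure_of_bind_particleStep [IsProbabilityMeasure (L 0)] (n : ℕ) :
    IsProbabilityMeasure (L n) := by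
  induction n with
  | zero => infer_instance
  | succ n ih =>
    rw [hL n]
    exact isProbabilityMeasure_bind (measurable_particleStep (hK _) (hKm _)).aemeasurable
      (.of_forall (isProbabilityMeasure_particleStep (hK _)))

theorem isExchangeable_of_bind_particleStep (h0 : IsExchangeable (L 0)) (n : ℕ) :
    IsExchangeable (L n) := by
  induction n with
  | zero => exact h0
  | succ n ih =>
    rw [hL n]
    exact ih.bind (measurable_particleStep (hK _) (hKm _)) (particleStep_map_comp_perm (hK _))

theorem lintegral_lintegral_emp_succ_of_bind_particleStep {f : X → ℝ≥0∞} (hf : Measurable f)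
    (n : ℕ) : ∫⁻ x, ∫⁻ y, f y ∂emp x ∂L (n + 1)
      = ∫⁻ x, ∫⁻ y, f y ∂(emp x).bind (K (n + 1) (emp x)) ∂L n := by
  rw [hL n, Measure.lintegral_bind (measurable_particleStep (hK _) (hKm _)).aemeasurable
    (measurable_lintegral_emp hf).aemeasurable]
  simp_rw [lintegral_lintegral_emp_particleStep (hK _) (hKm _) hf]

end ParticleLaw

open Finset in
theorem le_prod_mul_add_sum_prod_of_le_mul_add {R : Type*} [CommSemiring R] [PartialOrder R]
    [CanonicallyOrderedAdd R] [IsOrderedRing R] {s r : ℕ → R} {c : R}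
    (h : ∀ n, s (n + 1) ≤ r (n + 1) * s n + c) (n : ℕ) :
    s n ≤ (∏ i ∈ Icc 1 n, r i) * s 0 + c * ∑ k ∈ Icc 1 n, ∏ j ∈ Icc (k + 1) n, r j := by
  induction n with
  | zero => simp
  | succ n ih =>
    have hsum : ∑ k ∈ Icc 1 (n + 1), ∏ j ∈ Icc (k + 1) (n + 1), r j
        = (∑ k ∈ Icc 1 n, ∏ j ∈ Icc (k + 1) n, r j) * r (n + 1) + 1 := by
      rw [sum_Icc_succ_top (by omega), Icc_eq_empty (a := n + 1 + 1) (by omega), prod_empty,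
        sum_mul]
      congr 1
      refine sum_congr rfl fun k hk => prod_Icc_succ_top ?_ _
      have := (mem_Icc.mp hk).2
      omega
    calc s (n + 1) ≤ r (n + 1) * s n + c := h n
      _ ≤ r (n + 1) * ((∏ i ∈ Icc 1 n, r i) * s 0
            + c * ∑ k ∈ Icc 1 n, ∏ j ∈ Icc (k + 1) n, r j) + c := by gcongr
      _ = _ := by rw [prod_Icc_succ_top (by omega), hsum]; ring

open NNReal in
theorem stmt11_general {d N : ℕ} (hN : 0 < N)
    (K : ℕ → Measure (Ed d) → Ed d → Measure (Ed d))
    (hK : ∀ n η x, IsProbabilityMeasure (K n η x))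
    (hKm : ∀ n, Measurable fun xz : (Fin N → Ed d) × Ed d => K n (emp xz.1) xz.2)
    (V : Ed d → ℝ≥0∞) (hV : Measurable V)
    (a b : ℕ → ℝ≥0) (c : ℝ≥0)
    (hLyap : ∀ n (ηm : Measure (Ed d)), IsProbabilityMeasure ηm → ∀ x,
      ∫⁻ y, V y ∂(K n ηm x) ≤ (a n : ℝ≥0∞) * V x + (b n : ℝ≥0∞) * ∫⁻ y, V y ∂ηm + c)
    -- particle system: i.i.d. initial condition, conditionally independent updates
    (η0 : Measure (Ed d)) (hη0 : IsProbabilityMeasure η0)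
    (L : ℕ → Measure (Fin N → Ed d))
    (hL0 : L 0 = Measure.pi fun _ => η0)
    (hdyn : ∀ n, L (n + 1) =
      (L n).bind (fun x => Measure.pi fun i => K (n + 1) (emp x) (x i))) :
    (∀ n, ∫⁻ x, (∫⁻ y, V y ∂((emp x).bind (K (n + 1) (emp x)))) ∂(L n)
      ≤ (∏ i ∈ Finset.Icc 1 (n + 1), ((a i + b i : ℝ≥0) : ℝ≥0∞)) *
          ∫⁻ x, (∫⁻ y, V y ∂(emp x)) ∂(L 0)
        + (c : ℝ≥0∞) * ∑ k ∈ Finset.Icc 1 (n + 1),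
            ∏ j ∈ Finset.Icc (k + 1) (n + 1), ((a j + b j : ℝ≥0) : ℝ≥0∞))
    ∧ (∀ n, ∫⁻ x, V (x ⟨0, hN⟩) ∂(L n) = ∫⁻ x, (∫⁻ y, V y ∂(emp x)) ∂(L n)) := by
  have hL_succ (n : ℕ) : L (n + 1) = (L n).bind (particleStep (K (n + 1))) := hdyn n
  have : IsProbabilityMeasure (L 0) := hL0 ▸ inferInstance
  have hprob := isProbabilityMeasure_of_bind_particleStep hK hKm hL_succ
  have hexch := isExchangeable_of_bind_particleStep hK hKm hL_succ
    (hL0 ▸ isExchangeable_pi_const η0)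
  have hmean_succ := lintegral_lintegral_emp_succ_of_bind_particleStep hK hKm hL_succ hV
  refine ⟨fun n => ?_, fun n => ((hexch n).lintegral_lintegral_emp hV hN).symm⟩
  simp only [ENNReal.coe_add]
  rw [← hmean_succ n]
  exact le_prod_mul_add_sum_prod_of_le_mul_add (s := fun n => ∫⁻ x, ∫⁻ y, V y ∂emp x ∂L n)
    (fun n => (hmean_succ n).trans_le
      (lintegral_lintegral_emp_bind_le hN.ne' (hKm (n + 1)) hV (hLyap (n + 1)))) (n + 1)

open NNReal in
/-- Under the Lyapunov condition, the particle system satisfies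
`E[Φ_{n+1}[η^N_n](V)] ≤ A(n+1)·E[η^N_0(V)] + c·Σ_{k=1}^{n+1} Π_{j=k+1}^{n+1}(a_j+b_j)`,
and by exchangeability `E[V(X^1_n)] = E[η^N_n(V)]`. -/
theorem stmt11 {d N : ℕ} (hN : 0 < N)
    (K : ℕ → Measure (Ed d) → Ed d → Measure (Ed d))
    (hK : ∀ n η x, IsProbabilityMeasure (K n η x))
    (hKm : ∀ n, Measurable fun xz : (Fin N → Ed d) × Ed d => K n (emp xz.1) xz.2)
    (V : Ed d → ℝ≥0∞) (hV : Measurable V)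
    (a b : ℕ → ℝ≥0) (c : ℝ≥0)
    (hLyap : ∀ n (ηm : Measure (Ed d)), IsProbabilityMeasure ηm → ∀ x,
      ∫⁻ y, V y ∂(K n ηm x) ≤ (a n : ℝ≥0∞) * V x + (b n : ℝ≥0∞) * ∫⁻ y, V y ∂ηm + c)
    -- particle system: i.i.d. initial condition, conditionally independent updates
    (η0 : Measure (Ed d)) (hη0 : IsProbabilityMeasure η0)
    (L : ℕ → Measure (Fin N → Ed d))
    (hL0 : L 0 = Measure.pi fun _ => η0)
    (hdyn : ∀ n, L (n + 1) =
      (L n).bind (fun x => Measure.pi fun i => K (n + 1) (emp x) (x i)))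
    (hη0V : ∫⁻ x, (∫⁻ y, V y ∂(emp x)) ∂(L 0) < ⊤) :
    (∀ n, ∫⁻ x, (∫⁻ y, V y ∂((emp x).bind (K (n + 1) (emp x)))) ∂(L n)
      ≤ (∏ i ∈ Finset.Icc 1 (n + 1), ((a i + b i : ℝ≥0) : ℝ≥0∞)) *
          ∫⁻ x, (∫⁻ y, V y ∂(emp x)) ∂(L 0)
        + (c : ℝ≥0∞) * ∑ k ∈ Finset.Icc 1 (n + 1),
            ∏ j ∈ Finset.Icc (k + 1) (n + 1), ((a j + b j : ℝ≥0) : ℝ≥0∞))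
    ∧ (∀ n, ∫⁻ x, V (x ⟨0, hN⟩) ∂(L n) = ∫⁻ x, (∫⁻ y, V y ∂(emp x)) ∂(L n)) :=
  stmt11_general hN K hK hKm V hV a b c hLyap η0 hη0 L hL0 hdyn
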